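/- arXiv:1707.02814 — 4 statements merged into one kernel-verified Lean document; each statement's English description precedes it below -/
import Mathlib

section
/- Let N be the partition matroid on [n] with connected components C_1, …, C_k where the restriction to C_ℓ is uniform of rank d_ℓ with 0 < d_ℓ < |C_ℓ|. For a permutation giving the order C_1, …, C_k, let M be the nested matroid whose bases are the d-subsets S with Σ_{ℓ=1}^h |S ∩ C_ℓ| ≤ Σ_{ℓ=1}^h d_ℓ for all h < k, where d = Σ d_ℓ. Then M is a connected matroid and its cyclic flats are exactly the k+1 sets ∅, C_1, C_1∪C_2, …, C_1∪…∪C_k = [n], of ranks 0, d_1, d_1+d_2, …, d. -/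
/-- Bases of the nested matroid determined by the ordered components
`C 0 ≺ … ≺ C (k-1)` with ranks `dd`: the `(∑ dd)`-sets whose partial sums of
intersections with the prefix components are bounded by the partial sums of
the ranks. -/
def NestedBase (n k : ℕ) (C : Fin k → Finset (Fin n)) (dd : Fin k → ℕ)
    (S : Finset (Fin n)) : Prop :=
  S.card = (∑ ℓ, dd ℓ) ∧ ∀ h : ℕ, h < k →
    (∑ ℓ ∈ Finset.univ.filter (fun ℓ : Fin k => (ℓ : ℕ) < h), (S ∩ C ℓ).card)
      ≤ ∑ ℓ ∈ Finset.univ.filter (fun ℓ : Fin k => (ℓ : ℕ) < h), dd ℓ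

/-- The rank of a set `A` in the nested matroid: the maximal size of the
intersection of a basis with `A`. -/
noncomputable def NestedRank (n k : ℕ) (C : Fin k → Finset (Fin n))
    (dd : Fin k → ℕ) (A : Finset (Fin n)) : ℕ :=
  sSup {m | ∃ B, NestedBase n k C dd B ∧ (B ∩ A).card = m}

/-- `A` is a flat of the nested matroid: adding any element increases rank. -/
def NestedFlat (n k : ℕ) (C : Fin k → Finset (Fin n)) (dd : Fin k → ℕ)
    (A : Finset (Fin n)) : Prop :=
  ∀ e ∉ A, NestedRank n k C dd A < NestedRank n k C dd (insert e A)

/-- `A` is cyclic: the restriction to `A` has no coloops, i.e. removing any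
element of `A` does not lower the rank of `A`. -/
def NestedCyclic (n k : ℕ) (C : Fin k → Finset (Fin n)) (dd : Fin k → ℕ)
    (A : Finset (Fin n)) : Prop :=
  ∀ e ∈ A, NestedRank n k C dd (A.erase e) = NestedRank n k C dd A

/-- Connectedness: no proper nonempty separator, i.e. no set `S` with
`∅ ⊊ S ⊊ [n]` such that every basis meets `S` in a constant number of
elements. -/
def NestedConnected (n k : ℕ) (C : Fin k → Finset (Fin n)) (dd : Fin k → ℕ) : Prop :=
  ¬ ∃ S : Finset (Fin n), S.Nonempty ∧ S ≠ Finset.univ ∧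
    ∃ m : ℕ, ∀ B, NestedBase n k C dd B → (B ∩ S).card = m

/-!
Write `P h = C 0 ∪ … ∪ C (h-1)` and `D h = dd 0 + … + dd (h-1)`. The rank of `A` in the nested
matroid is `min_{h ≤ k} (D h + |A \ P h|)`: a basis meets `P h` in at most `D h` elements, and
the minimum is attained by choosing elements of `A` greedily, component by component, within the
prefix budgets `D h`, and then extending to a basis. If `h` attains the minimum for a cyclic flat
`A`, flatness forces `P h ⊆ A` and cyclicity forces `A ⊆ P h`.

Conversely, the bases of the partition matroid (exactly `dd ℓ` elements in each `C ℓ`) are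
nested bases meeting every `P h` in exactly `D h` elements. Since `0 < dd ℓ < |C ℓ|`, they can be
chosen to contain or avoid any given element, which shows that every `P h` is a cyclic flat of
rank `D h`. Replacing, in such a basis, an element by one from a later component gives another
basis, so a set meeting all bases in the same number of elements contains all of the ground set
or none of it.
-/

open Finset Function

namespace NestedMatroid

section General

variable {α : Type*} [DecidableEq α] {k : ℕ} {C : Fin k → Finset α} {dd : Fin k → ℕ}

def prefixUnion (C : Fin k → Finset α) (h : ℕ) : Finset α :=
  (univ.filter (fun ℓ : Fin k => (ℓ : ℕ) < h)).biUnion C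

def prefixSum (f : Fin k → ℕ) (h : ℕ) : ℕ :=
  ∑ ℓ ∈ univ.filter (fun ℓ : Fin k => (ℓ : ℕ) < h), f ℓ

lemma filter_lt_succ (ℓ : Fin k) :
    univ.filter (fun m : Fin k => (m : ℕ) < ℓ + 1)
      = insert ℓ (univ.filter (fun m : Fin k => (m : ℕ) < ℓ)) := by
  ext m
  simp only [mem_filter, mem_univ, true_and, mem_insert, Fin.ext_iff]
  omega

lemma filter_lt_of_le {h : ℕ} (hk : k ≤ h) :
    univ.filter (fun ℓ : Fin k => (ℓ : ℕ) < h) = univ :=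
  filter_true_of_mem fun ℓ _ => ℓ.isLt.trans_le hk

lemma filter_lt_mono : Monotone fun h => univ.filter (fun ℓ : Fin k => (ℓ : ℕ) < h) :=
  fun _ _ hh _ => by simp only [mem_filter, mem_univ, true_and]; omega

lemma prefixSum_mono (f : Fin k → ℕ) : Monotone (prefixSum f) := fun _ _ hh =>
  sum_le_sum_of_subset (filter_lt_mono hh)

lemma prefixSum_succ (f : Fin k → ℕ) (ℓ : Fin k) :
    prefixSum f (ℓ + 1) = prefixSum f ℓ + f ℓ := by
  rw [prefixSum, filter_lt_succ, sum_insert (by simp), add_comm, prefixSum]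

lemma prefixSum_of_le (f : Fin k → ℕ) {h : ℕ} (hk : k ≤ h) : prefixSum f h = ∑ ℓ, f ℓ := by
  rw [prefixSum, filter_lt_of_le hk]

lemma prefixUnion_zero : prefixUnion C 0 = ∅ := by
  simp [prefixUnion]

lemma prefixUnion_mono : Monotone (prefixUnion C) := fun _ _ hh =>
  biUnion_subset_biUnion_of_subset_left _ (filter_lt_mono hh)

lemma prefixUnion_succ (ℓ : Fin k) : prefixUnion C (ℓ + 1) = prefixUnion C ℓ ∪ C ℓ := by
  rw [prefixUnion, filter_lt_succ, biUnion_insert, union_comm, prefixUnion]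

lemma prefixUnion_of_le [Fintype α] (hcover : ∀ x, ∃ ℓ, x ∈ C ℓ) {h : ℕ} (hk : k ≤ h) :
    prefixUnion C h = univ := by
  simpa [prefixUnion, filter_lt_of_le hk, eq_univ_iff_forall] using hcover

lemma mem_prefixUnion_iff (hC : Pairwise (Disjoint on C)) {x : α} {a : Fin k} (hx : x ∈ C a)
    {h : ℕ} : x ∈ prefixUnion C h ↔ (a : ℕ) < h := by
  simp only [prefixUnion, mem_biUnion, mem_filter, mem_univ, true_and]
  refine ⟨fun ⟨b, hb, hxb⟩ => ?_, fun ha => ⟨a, ha, hx⟩⟩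
  obtain rfl : b = a := by_contra fun hba => disjoint_left.mp (hC hba) hxb hx
  exact hb

lemma disjoint_prefixUnion (hC : Pairwise (Disjoint on C)) {ℓ : Fin k} {h : ℕ}
    (hh : h ≤ ℓ) : Disjoint (C ℓ) (prefixUnion C h) :=
  disjoint_left.mpr fun _ hx hxP => ((mem_prefixUnion_iff hC hx).mp hxP).not_ge hh

lemma card_inter_prefixUnion (hC : Pairwise (Disjoint on C)) (S : Finset α) (h : ℕ) :
    (S ∩ prefixUnion C h).card = prefixSum (fun ℓ => (S ∩ C ℓ).card) h := by
  rw [prefixUnion, inter_biUnion, card_biUnion, prefixSum]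
  exact fun a _ b _ hab => (hC hab).mono inter_subset_right inter_subset_right

lemma card_eq_sum_card_inter [Fintype α] (hC : Pairwise (Disjoint on C))
    (hcover : ∀ x, ∃ ℓ, x ∈ C ℓ) (S : Finset α) : S.card = ∑ ℓ, (S ∩ C ℓ).card := by
  rw [← prefixSum_of_le _ le_rfl, ← card_inter_prefixUnion hC, prefixUnion_of_le hcover le_rfl,
    inter_univ]

lemma sum_le_prefixSum_add_card_compl [Fintype α] (hC : Pairwise (Disjoint on C))
    (hcover : ∀ x, ∃ ℓ, x ∈ C ℓ) (hdC : ∀ ℓ, dd ℓ ≤ (C ℓ).card) (h : ℕ) :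
    ∑ ℓ, dd ℓ ≤ prefixSum dd h + (prefixUnion C h)ᶜ.card := by
  have hsplit (f : Fin k → ℕ) :
      prefixSum f h + ∑ ℓ ∈ univ.filter (fun ℓ : Fin k => ¬ (ℓ : ℕ) < h), f ℓ = ∑ ℓ, f ℓ :=
    sum_filter_add_sum_filter_not _ _ _
  have hcompl := card_compl_add_card (prefixUnion C h)
  have hP := card_inter_prefixUnion hC univ h
  have huniv := card_eq_sum_card_inter hC hcover univ
  simp only [univ_inter, card_univ] at hP huniv
  have hsuffix : ∑ ℓ ∈ univ.filter (fun ℓ : Fin k => ¬ (ℓ : ℕ) < h), dd ℓ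
      ≤ ∑ ℓ ∈ univ.filter (fun ℓ : Fin k => ¬ (ℓ : ℕ) < h), (C ℓ).card :=
    sum_le_sum fun ℓ _ => hdC ℓ
  have := hsplit dd
  have := hsplit fun ℓ => (C ℓ).card
  omega

def IsPartitionBase (C : Fin k → Finset α) (dd : Fin k → ℕ) (B : Finset α) : Prop :=
  ∀ ℓ, (B ∩ C ℓ).card = dd ℓ

lemma IsPartitionBase.card_inter_prefixUnion (hC : Pairwise (Disjoint on C)) {B : Finset α}
    (hB : IsPartitionBase C dd B) (h : ℕ) : (B ∩ prefixUnion C h).card = prefixSum dd h := by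
  rw [NestedMatroid.card_inter_prefixUnion hC]
  exact sum_congr rfl fun ℓ _ => hB ℓ

lemma exists_isPartitionBase (hC : Pairwise (Disjoint on C)) (hcover : ∀ x, ∃ ℓ, x ∈ C ℓ)
    {s t : Finset α} (hst : s ⊆ t) (hs : ∀ ℓ, (s ∩ C ℓ).card ≤ dd ℓ)
    (ht : ∀ ℓ, dd ℓ ≤ (t ∩ C ℓ).card) :
    ∃ B, s ⊆ B ∧ B ⊆ t ∧ IsPartitionBase C dd B := by
  choose U hsU hUt hU using fun ℓ =>
    exists_subsuperset_card_eq (inter_subset_inter_right hst) (hs ℓ) (ht ℓ)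
  have hUC ℓ : U ℓ ⊆ C ℓ := (hUt ℓ).trans inter_subset_right
  have hinter ℓ : univ.biUnion U ∩ C ℓ = U ℓ := by
    ext x
    simp only [mem_inter, mem_biUnion, mem_univ, true_and]
    refine ⟨fun ⟨⟨m, hxm⟩, hxℓ⟩ => ?_, fun hx => ⟨⟨ℓ, hx⟩, hUC ℓ hx⟩⟩
    obtain rfl : m = ℓ := by_contra fun hmℓ => disjoint_left.mp (hC hmℓ) (hUC m hxm) hxℓ
    exact hxm
  refine ⟨univ.biUnion U, fun x hx => ?_, biUnion_subset.mpr fun ℓ _ => (hUt ℓ).trans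
    inter_subset_left, fun ℓ => by rw [hinter, hU]⟩
  obtain ⟨ℓ, hxℓ⟩ := hcover x
  exact mem_biUnion.mpr ⟨ℓ, mem_univ _, hsU ℓ (mem_inter.mpr ⟨hx, hxℓ⟩)⟩

def Indep (C : Fin k → Finset α) (dd : Fin k → ℕ) (I : Finset α) : Prop :=
  ∀ h, (I ∩ prefixUnion C h).card ≤ prefixSum dd h

lemma Indep.card_le [Fintype α] (hcover : ∀ x, ∃ ℓ, x ∈ C ℓ) {I : Finset α}
    (hI : Indep C dd I) : I.card ≤ ∑ ℓ, dd ℓ := by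
  simpa [prefixUnion_of_le hcover le_rfl, prefixSum_of_le dd le_rfl] using hI k

lemma Indep.union (hC : Pairwise (Disjoint on C)) {I T : Finset α} {ℓ : Fin k}
    (hI : Indep C dd I) (hT : T ⊆ C ℓ)
    (hcard : I.card + T.card ≤ prefixSum dd (ℓ + 1)) : Indep C dd (I ∪ T) := by
  intro h
  rcases le_or_gt h ℓ with hh | hh
  · have hTP : Disjoint T (prefixUnion C h) := (disjoint_prefixUnion hC hh).mono_left hT
    rw [union_inter_distrib_right, disjoint_iff_inter_eq_empty.mp hTP, union_empty]
    exact hI h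
  · calc ((I ∪ T) ∩ prefixUnion C h).card ≤ (I ∪ T).card := card_le_card inter_subset_left
      _ ≤ I.card + T.card := card_union_le I T
      _ ≤ prefixSum dd (ℓ + 1) := hcard
      _ ≤ prefixSum dd h := prefixSum_mono dd hh

-- The last inequality says `|I| ≥ D h + |A ∩ (P ℓ \ P h)|`, written without truncated subtraction.
lemma exists_indep_subset_inter_prefixUnion (hC : Pairwise (Disjoint on C)) (A : Finset α)
    (ℓ : ℕ) (hℓ : ℓ ≤ k) :
    ∃ I ⊆ A ∩ prefixUnion C ℓ, Indep C dd I ∧ ∃ h ≤ ℓ,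
      prefixSum dd h + (A ∩ prefixUnion C ℓ).card ≤ I.card + (A ∩ prefixUnion C h).card := by
  induction ℓ with
  | zero => exact ⟨∅, empty_subset _, fun h => by simp, 0, le_rfl, by simp [prefixSum]⟩
  | succ ℓ ih =>
    obtain ⟨I, hIA, hI, h, hh, hbound⟩ := ih (by omega)
    let i : Fin k := ⟨ℓ, by omega⟩
    have hPsucc : prefixUnion C (ℓ + 1) = prefixUnion C ℓ ∪ C i := prefixUnion_succ i
    have hDsucc : prefixSum dd (ℓ + 1) = prefixSum dd ℓ + dd i := prefixSum_succ dd i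
    have hAsucc : (A ∩ prefixUnion C (ℓ + 1)).card
        = (A ∩ prefixUnion C ℓ).card + (A ∩ C i).card := by
      simp only [card_inter_prefixUnion hC]
      exact prefixSum_succ _ i
    have hIP : I ⊆ prefixUnion C ℓ := hIA.trans inter_subset_right
    have hIcard : I.card ≤ prefixSum dd ℓ := by simpa [inter_eq_left.mpr hIP] using hI ℓ
    obtain ⟨T, hTA, hTcard⟩ := exists_subset_card_eq
      (min_le_left (A ∩ C i).card (prefixSum dd (ℓ + 1) - I.card))
    have hTC : T ⊆ C i := hTA.trans inter_subset_right
    have hIT : Disjoint I T := ((disjoint_prefixUnion hC le_rfl).mono hTC hIP).symm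
    have hcard : I.card + T.card ≤ prefixSum dd (ℓ + 1) := by omega
    have hTP : T ⊆ prefixUnion C (ℓ + 1) := by
      rw [hPsucc]; exact hTC.trans subset_union_right
    refine ⟨I ∪ T, union_subset (hIA.trans (inter_subset_inter_left (prefixUnion_mono ℓ.le_succ)))
      (subset_inter (hTA.trans inter_subset_left) hTP), hI.union hC hTC hcard, ?_⟩
    rw [card_union_of_disjoint hIT, hAsucc]
    by_cases hfit : (A ∩ C i).card ≤ prefixSum dd (ℓ + 1) - I.card
    · exact ⟨h, by omega, by omega⟩
    · exact ⟨ℓ + 1, le_rfl, by omega⟩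

lemma card_inter_prefixUnion_lt_of_compl_subset [Fintype α] (hC : Pairwise (Disjoint on C))
    (hcover : ∀ x, ∃ ℓ, x ∈ C ℓ) (hdC : ∀ ℓ, dd ℓ ≤ (C ℓ).card) {I : Finset α}
    (hlt : I.card < ∑ ℓ, dd ℓ) {h : ℕ} (hI : (prefixUnion C h)ᶜ ⊆ I) :
    (I ∩ prefixUnion C h).card < prefixSum dd h := by
  have hcompl : (prefixUnion C h)ᶜ.card ≤ (I \ prefixUnion C h).card :=
    card_le_card fun x hx => mem_sdiff.mpr ⟨hI hx, mem_compl.mp hx⟩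
  have := card_inter_add_card_sdiff I (prefixUnion C h)
  have := sum_le_prefixSum_add_card_compl hC hcover hdC h
  omega

lemma Indep.exists_insert [Fintype α] (hC : Pairwise (Disjoint on C))
    (hcover : ∀ x, ∃ ℓ, x ∈ C ℓ) (hdC : ∀ ℓ, dd ℓ ≤ (C ℓ).card) {I : Finset α}
    (hI : Indep C dd I) (hlt : I.card < ∑ ℓ, dd ℓ) : ∃ x ∉ I, Indep C dd (insert x I) := by
  classical
  -- The new element is taken from the last component not contained in `I`: beyond it, every
  -- prefix constraint has slack.
  have hex : ∃ h, (prefixUnion C h)ᶜ ⊆ I := ⟨k, by simp [prefixUnion_of_le hcover le_rfl]⟩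
  have hslack {h : ℕ} (hsub : (prefixUnion C h)ᶜ ⊆ I) :=
    card_inter_prefixUnion_lt_of_compl_subset hC hcover hdC hlt hsub
  obtain ⟨m, hm⟩ : ∃ m, Nat.find hex = m + 1 := Nat.exists_eq_succ_of_ne_zero fun h0 => by
    simpa [prefixUnion_zero, prefixSum] using hslack (h := 0) (h0 ▸ Nat.find_spec hex)
  obtain ⟨x, hxm, hxI⟩ := not_subset.mp (Nat.find_min hex (show m < Nat.find hex by omega))
  refine ⟨x, hxI, fun h => ?_⟩
  rcases le_or_gt h m with hh | hh
  · rw [insert_inter_of_notMem fun hx => mem_compl.mp hxm (prefixUnion_mono hh hx)]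
    exact hI h
  · have := hslack (h := h) ((compl_subset_compl.mpr (prefixUnion_mono (by omega))).trans
      (hm ▸ Nat.find_spec hex))
    calc (insert x I ∩ prefixUnion C h).card ≤ (insert x (I ∩ prefixUnion C h)).card :=
          card_le_card fun y => by simp only [mem_inter, mem_insert]; tauto
      _ ≤ prefixSum dd h := (card_insert_le _ _).trans this

lemma Indep.exists_superset [Fintype α] (hC : Pairwise (Disjoint on C))
    (hcover : ∀ x, ∃ ℓ, x ∈ C ℓ) (hdC : ∀ ℓ, dd ℓ ≤ (C ℓ).card) {I : Finset α}
    (hI : Indep C dd I) : ∃ B, I ⊆ B ∧ B.card = ∑ ℓ, dd ℓ ∧ Indep C dd B := by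
  induction hm : ∑ ℓ, dd ℓ - I.card generalizing I with
  | zero => exact ⟨I, subset_rfl, le_antisymm (hI.card_le hcover) (by omega), hI⟩
  | succ m ih =>
    obtain ⟨x, hxI, hxI'⟩ := hI.exists_insert hC hcover hdC (by omega)
    obtain ⟨B, hB, hBcard, hBI⟩ := ih hxI' (by rw [card_insert_of_notMem hxI]; omega)
    exact ⟨B, (subset_insert x I).trans hB, hBcard, hBI⟩

lemma card_singleton_inter_le (h0 : ∀ ℓ, 0 < dd ℓ) (e : α) (ℓ : Fin k) :
    ({e} ∩ C ℓ).card ≤ dd ℓ :=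
  (card_le_card inter_subset_left).trans ((card_singleton e).trans_le (h0 ℓ))

lemma le_card_erase_inter [Fintype α] (h1 : ∀ ℓ, dd ℓ < (C ℓ).card) (f : α) (ℓ : Fin k) :
    dd ℓ ≤ (univ.erase f ∩ C ℓ).card := by
  have := (C ℓ).pred_card_le_card_erase (a := f)
  have := h1 ℓ
  rw [erase_inter, univ_inter]
  omega

lemma card_insert_erase_inter_add {B X : Finset α} {e f : α} (heB : e ∈ B) (hfB : f ∉ B) :
    (insert f (B.erase e) ∩ X).card + (if e ∈ X then 1 else 0)
      = (B ∩ X).card + (if f ∈ X then 1 else 0) := by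
  have hf : f ∉ B.erase e ∩ X := fun h => hfB (mem_of_mem_erase (mem_inter.1 h).1)
  have hcard : (B.erase e ∩ X).card + (if e ∈ X then 1 else 0) = (B ∩ X).card := by
    split_ifs with heX
    · rw [erase_inter, card_erase_add_one (mem_inter.2 ⟨heB, heX⟩)]
    · rw [erase_inter, erase_eq_of_notMem fun h => heX (mem_inter.1 h).2, add_zero]
  by_cases hfX : f ∈ X
  · rw [insert_inter_of_mem hfX, card_insert_of_notMem hf, if_pos hfX]
    omega
  · rw [insert_inter_of_notMem hfX, if_neg hfX]
    omega

end General

section Nested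

variable {n k : ℕ} {C : Fin k → Finset (Fin n)} {dd : Fin k → ℕ}

lemma nestedBase_iff (hC : Pairwise (Disjoint on C)) {S : Finset (Fin n)} :
    NestedBase n k C dd S ↔ S.card = ∑ ℓ, dd ℓ ∧ Indep C dd S := by
  refine ⟨fun ⟨hcard, hpre⟩ => ⟨hcard, fun h => ?_⟩, fun ⟨hcard, hS⟩ => ⟨hcard, fun h _ => ?_⟩⟩
  · rcases lt_or_ge h k with hh | hh
    · rw [card_inter_prefixUnion hC]
      exact hpre h hh
    · rw [prefixSum_of_le dd hh, ← hcard]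
      exact card_le_card inter_subset_left
  · have := hS h
    rw [card_inter_prefixUnion hC] at this
    exact this

lemma IsPartitionBase.nestedBase (hC : Pairwise (Disjoint on C)) (hcover : ∀ x, ∃ ℓ, x ∈ C ℓ)
    {B : Finset (Fin n)} (hB : IsPartitionBase C dd B) : NestedBase n k C dd B :=
  (nestedBase_iff hC).2 ⟨(card_eq_sum_card_inter hC hcover B).trans (sum_congr rfl fun ℓ _ => hB ℓ),
    fun h => (hB.card_inter_prefixUnion hC h).le⟩

lemma le_nestedRank {B : Finset (Fin n)} (hB : NestedBase n k C dd B) (A : Finset (Fin n)) :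
    (B ∩ A).card ≤ NestedRank n k C dd A :=
  le_csSup ⟨A.card, by rintro _ ⟨B', -, rfl⟩; exact card_le_card inter_subset_right⟩ ⟨B, hB, rfl⟩

lemma nestedRank_le {A : Finset (Fin n)} {m : ℕ}
    (h : ∀ B, NestedBase n k C dd B → (B ∩ A).card ≤ m) : NestedRank n k C dd A ≤ m :=
  csSup_le' (by rintro _ ⟨B, hB, rfl⟩; exact h B hB)

lemma nestedRank_le_prefixSum_add (hC : Pairwise (Disjoint on C)) (A : Finset (Fin n)) (h : ℕ) :
    NestedRank n k C dd A ≤ prefixSum dd h + (A \ prefixUnion C h).card :=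
  nestedRank_le fun B hB => calc
    (B ∩ A).card ≤ (B ∩ prefixUnion C h ∪ A \ prefixUnion C h).card :=
      card_le_card fun x => by simp only [mem_inter, mem_union, mem_sdiff]; tauto
    _ ≤ (B ∩ prefixUnion C h).card + (A \ prefixUnion C h).card := card_union_le _ _
    _ ≤ prefixSum dd h + (A \ prefixUnion C h).card :=
      Nat.add_le_add_right (((nestedBase_iff hC).1 hB).2 h) _

lemma exists_prefixSum_add_le_nestedRank (hC : Pairwise (Disjoint on C))
    (hcover : ∀ x, ∃ ℓ, x ∈ C ℓ) (hdC : ∀ ℓ, dd ℓ ≤ (C ℓ).card) (A : Finset (Fin n)) :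
    ∃ h ≤ k, prefixSum dd h + (A \ prefixUnion C h).card ≤ NestedRank n k C dd A := by
  obtain ⟨I, hIA, hI, h, hh, hbound⟩ :=
    exists_indep_subset_inter_prefixUnion (dd := dd) hC A k le_rfl
  obtain ⟨B, hIB, hBcard, hB⟩ := hI.exists_superset hC hcover hdC
  rw [prefixUnion_of_le hcover le_rfl, inter_univ] at hIA hbound
  have hIBA : I.card ≤ (B ∩ A).card := card_le_card (subset_inter hIB hIA)
  have := card_inter_add_card_sdiff A (prefixUnion C h)
  have := le_nestedRank ((nestedBase_iff hC).2 ⟨hBcard, hB⟩) A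
  exact ⟨h, hh, by omega⟩

lemma exists_nestedRank_eq (hC : Pairwise (Disjoint on C)) (hcover : ∀ x, ∃ ℓ, x ∈ C ℓ)
    (hdC : ∀ ℓ, dd ℓ ≤ (C ℓ).card) (A : Finset (Fin n)) :
    ∃ h ≤ k, NestedRank n k C dd A = prefixSum dd h + (A \ prefixUnion C h).card :=
  let ⟨h, hh, hle⟩ := exists_prefixSum_add_le_nestedRank hC hcover hdC A
  ⟨h, hh, (nestedRank_le_prefixSum_add hC A h).antisymm hle⟩

lemma nestedRank_prefixUnion (hC : Pairwise (Disjoint on C)) (hcover : ∀ x, ∃ ℓ, x ∈ C ℓ)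
    (hdC : ∀ ℓ, dd ℓ ≤ (C ℓ).card) (h : ℕ) :
    NestedRank n k C dd (prefixUnion C h) = prefixSum dd h := by
  obtain ⟨B, -, -, hB⟩ :=
    exists_isPartitionBase hC hcover (empty_subset univ) (by simp) (by simpa using hdC)
  refine le_antisymm ?_ ?_
  · simpa using nestedRank_le_prefixSum_add hC (prefixUnion C h) h
  · exact (hB.card_inter_prefixUnion hC h).ge.trans (le_nestedRank (hB.nestedBase hC hcover) _)

lemma NestedFlat.prefixUnion_subset (hC : Pairwise (Disjoint on C)) {A : Finset (Fin n)} {h : ℕ}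
    (hA : NestedFlat n k C dd A)
    (hr : NestedRank n k C dd A = prefixSum dd h + (A \ prefixUnion C h).card) :
    prefixUnion C h ⊆ A := by
  intro e he
  by_contra heA
  have := hA e heA
  have := nestedRank_le_prefixSum_add (dd := dd) hC (insert e A) h
  rw [insert_sdiff_of_mem A he] at this
  omega

lemma NestedCyclic.subset_prefixUnion (hC : Pairwise (Disjoint on C)) {A : Finset (Fin n)}
    {h : ℕ} (hA : NestedCyclic n k C dd A)
    (hr : NestedRank n k C dd A = prefixSum dd h + (A \ prefixUnion C h).card) :
    A ⊆ prefixUnion C h := by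
  intro e heA
  by_contra he
  have := hA e heA
  have := nestedRank_le_prefixSum_add (dd := dd) hC (A.erase e) h
  rw [erase_sdiff_comm, card_erase_of_mem (mem_sdiff.2 ⟨heA, he⟩)] at this
  have := card_pos.2 ⟨e, mem_sdiff.2 ⟨heA, he⟩⟩
  omega

lemma nestedFlat_prefixUnion (hC : Pairwise (Disjoint on C)) (hcover : ∀ x, ∃ ℓ, x ∈ C ℓ)
    (h0 : ∀ ℓ, 0 < dd ℓ) (hdC : ∀ ℓ, dd ℓ ≤ (C ℓ).card) (h : ℕ) :
    NestedFlat n k C dd (prefixUnion C h) := by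
  intro e he
  obtain ⟨B, heB, -, hB⟩ := exists_isPartitionBase hC hcover (subset_univ {e})
    (card_singleton_inter_le h0 e) (by simpa using hdC)
  rw [nestedRank_prefixUnion hC hcover hdC]
  calc prefixSum dd h < (insert e (B ∩ prefixUnion C h)).card := by
        rw [card_insert_of_notMem fun h' => he (mem_inter.1 h').2,
          hB.card_inter_prefixUnion hC]
        omega
    _ = (B ∩ insert e (prefixUnion C h)).card := by
        rw [inter_insert_of_mem (singleton_subset_iff.1 heB)]
    _ ≤ _ := le_nestedRank (hB.nestedBase hC hcover) _

lemma nestedCyclic_prefixUnion (hC : Pairwise (Disjoint on C)) (hcover : ∀ x, ∃ ℓ, x ∈ C ℓ)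
    (h1 : ∀ ℓ, dd ℓ < (C ℓ).card) (h : ℕ) : NestedCyclic n k C dd (prefixUnion C h) := by
  intro e he
  obtain ⟨B, -, hBe, hB⟩ := exists_isPartitionBase hC hcover (empty_subset (univ.erase e))
    (by simp) (le_card_erase_inter h1 e)
  have heB : e ∉ B := fun h' => (mem_erase.1 (hBe h')).1 rfl
  rw [nestedRank_prefixUnion hC hcover fun ℓ => (h1 ℓ).le]
  refine le_antisymm ?_ ?_
  · simpa [sdiff_eq_empty_iff_subset.2 (erase_subset e _)] using
      nestedRank_le_prefixSum_add (dd := dd) hC ((prefixUnion C h).erase e) h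
  · calc prefixSum dd h = (B ∩ (prefixUnion C h).erase e).card := by
          rw [inter_erase, erase_eq_of_notMem fun h' => heB (mem_inter.1 h').1,
            hB.card_inter_prefixUnion hC]
      _ ≤ _ := le_nestedRank (hB.nestedBase hC hcover) _

theorem nestedFlat_and_nestedCyclic_iff (hC : Pairwise (Disjoint on C))
    (hcover : ∀ x, ∃ ℓ, x ∈ C ℓ) (h0 : ∀ ℓ, 0 < dd ℓ) (h1 : ∀ ℓ, dd ℓ < (C ℓ).card)
    (A : Finset (Fin n)) :
    NestedFlat n k C dd A ∧ NestedCyclic n k C dd A ↔ ∃ h ≤ k, A = prefixUnion C h := by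
  have hdC ℓ := (h1 ℓ).le
  refine ⟨fun ⟨hF, hZ⟩ => ?_, ?_⟩
  · obtain ⟨h, hh, hr⟩ := exists_nestedRank_eq hC hcover hdC A
    exact ⟨h, hh, (NestedCyclic.subset_prefixUnion hC hZ hr).antisymm
      (NestedFlat.prefixUnion_subset hC hF hr)⟩
  · rintro ⟨h, -, rfl⟩
    exact ⟨nestedFlat_prefixUnion hC hcover h0 hdC h, nestedCyclic_prefixUnion hC hcover h1 h⟩

lemma nestedBase_insert_erase (hC : Pairwise (Disjoint on C)) (hcover : ∀ x, ∃ ℓ, x ∈ C ℓ)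
    {B : Finset (Fin n)} (hB : IsPartitionBase C dd B) {e f : Fin n} {a b : Fin k}
    (he : e ∈ C a) (hf : f ∈ C b) (hab : a ≤ b) (heB : e ∈ B) (hfB : f ∉ B) :
    NestedBase n k C dd (insert f (B.erase e)) := by
  have hcard := ((nestedBase_iff hC).1 (hB.nestedBase hC hcover)).1
  refine (nestedBase_iff hC).2 ⟨?_, fun h => ?_⟩
  · rw [card_insert_of_notMem fun h' => hfB (mem_of_mem_erase h'), card_erase_of_mem heB,
      Nat.sub_add_cancel (card_pos.2 ⟨e, heB⟩), hcard]
  · have hswap := card_insert_erase_inter_add (X := prefixUnion C h) heB hfB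
    have hef : f ∈ prefixUnion C h → e ∈ prefixUnion C h := by
      simp only [mem_prefixUnion_iff hC he, mem_prefixUnion_iff hC hf]
      exact (Fin.le_def.1 hab).trans_lt
    rw [hB.card_inter_prefixUnion hC] at hswap
    by_cases hfP : f ∈ prefixUnion C h
    · rw [if_pos (hef hfP), if_pos hfP] at hswap
      omega
    · rw [if_neg hfP] at hswap
      omega

lemma mem_iff_mem_of_forall_card_inter_eq (hC : Pairwise (Disjoint on C))
    (hcover : ∀ x, ∃ ℓ, x ∈ C ℓ) (h0 : ∀ ℓ, 0 < dd ℓ) (h1 : ∀ ℓ, dd ℓ < (C ℓ).card)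
    {S : Finset (Fin n)} {m : ℕ} (hS : ∀ B, NestedBase n k C dd B → (B ∩ S).card = m)
    (e f : Fin n) : e ∈ S ↔ f ∈ S := by
  obtain ⟨a, he⟩ := hcover e
  obtain ⟨b, hf⟩ := hcover f
  wlog hab : a ≤ b generalizing e f a b
  · exact (this f e b hf a he (le_of_not_ge hab)).symm
  rcases eq_or_ne e f with rfl | hef
  · rfl
  obtain ⟨B, heB, hBf, hB⟩ := exists_isPartitionBase hC hcover
    (singleton_subset_iff.2 (mem_erase.2 ⟨hef, mem_univ e⟩)) (card_singleton_inter_le h0 e)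
    (le_card_erase_inter h1 f)
  have hfB : f ∉ B := fun h' => (mem_erase.1 (hBf h')).1 rfl
  have hswap := card_insert_erase_inter_add (X := S) (singleton_subset_iff.1 heB) hfB
  rw [hS _ (hB.nestedBase hC hcover),
    hS _ (nestedBase_insert_erase hC hcover hB he hf hab (singleton_subset_iff.1 heB) hfB)] at hswap
  split_ifs at hswap <;> simp_all

theorem nestedConnected (hC : Pairwise (Disjoint on C)) (hcover : ∀ x, ∃ ℓ, x ∈ C ℓ)
    (h0 : ∀ ℓ, 0 < dd ℓ) (h1 : ∀ ℓ, dd ℓ < (C ℓ).card) : NestedConnected n k C dd := by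
  rintro ⟨S, ⟨e, he⟩, hSne, m, hS⟩
  obtain ⟨f, hf⟩ : ∃ f, f ∉ S := by simpa [eq_univ_iff_forall] using hSne
  exact hf ((mem_iff_mem_of_forall_card_inter_eq hC hcover h0 h1 hS e f).1 he)

end Nested

end NestedMatroid

theorem stmt5_general (n k : ℕ) (C : Fin k → Finset (Fin n)) (dd : Fin k → ℕ)
    (hdisj : ∀ a b : Fin k, a ≠ b → Disjoint (C a) (C b))
    (hcover : ∀ i : Fin n, ∃ ℓ, i ∈ C ℓ)
    (h0 : ∀ ℓ, 0 < dd ℓ) (h1 : ∀ ℓ, dd ℓ < (C ℓ).card) :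
    NestedConnected n k C dd ∧
    (∀ A : Finset (Fin n),
      (NestedFlat n k C dd A ∧ NestedCyclic n k C dd A) ↔
        ∃ h : ℕ, h ≤ k ∧
          A = (Finset.univ.filter (fun ℓ : Fin k => (ℓ : ℕ) < h)).biUnion C) ∧
    (∀ h : ℕ, h ≤ k →
      NestedRank n k C dd
          ((Finset.univ.filter (fun ℓ : Fin k => (ℓ : ℕ) < h)).biUnion C)
        = ∑ ℓ ∈ Finset.univ.filter (fun ℓ : Fin k => (ℓ : ℕ) < h), dd ℓ) := by
  have hC : Pairwise (Disjoint on C) := fun a b hab => hdisj a b hab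
  exact ⟨NestedMatroid.nestedConnected hC hcover h0 h1,
    NestedMatroid.nestedFlat_and_nestedCyclic_iff hC hcover h0 h1,
    fun h _ => NestedMatroid.nestedRank_prefixUnion hC hcover (fun ℓ => (h1 ℓ).le) h⟩

/-- for a loop- and coloop-free partition matroid with connected
components `C 0, …, C (k-1)` of ranks `dd`, the associated nested matroid `M`
is connected, and its cyclic flats are exactly the `k+1` prefix unions
∅, C_1, C_1∪C_2, …, [n], of ranks 0, d_1, d_1+d_2, …, d. -/
theorem stmt5 (n k : ℕ) (hk : 0 < k) (C : Fin k → Finset (Fin n)) (dd : Fin k → ℕ)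
    (hdisj : ∀ a b : Fin k, a ≠ b → Disjoint (C a) (C b))
    (hcover : ∀ i : Fin n, ∃ ℓ, i ∈ C ℓ)
    (h0 : ∀ ℓ, 0 < dd ℓ) (h1 : ∀ ℓ, dd ℓ < (C ℓ).card) :
    NestedConnected n k C dd ∧
    (∀ A : Finset (Fin n),
      (NestedFlat n k C dd A ∧ NestedCyclic n k C dd A) ↔
        ∃ h : ℕ, h ≤ k ∧
          A = (Finset.univ.filter (fun ℓ : Fin k => (ℓ : ℕ) < h)).biUnion C) ∧
    (∀ h : ℕ, h ≤ k →
      NestedRank n k C dd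
          ((Finset.univ.filter (fun ℓ : Fin k => (ℓ : ℕ) < h)).biUnion C)
        = ∑ ℓ ∈ Finset.univ.filter (fun ℓ : Fin k => (ℓ : ℕ) < h), dd ℓ) :=
  stmt5_general n k C dd hdisj hcover h0 h1
end

section
/- Let M be a matroid of rank d on ground set E with connected components C_1, …, C_c. Then the matroid (base) polytope P(M) ⊆ ℝ^E has dimension |E| − c. -/
/-!
Write `e ~ f` for the equivalence relation generated by single basis exchanges `B ↦ B - e + f`.
Such an exchange preserves `|B ∩ S|` exactly when `e` and `f` are both in or both out of `S`, and
any two bases are joined by a chain of single exchanges; so the separators are exactly the unions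
of `~`-classes, and the connected components are the `~`-classes themselves.

The indicators of `B` and `B - e + f` differ by `𝟙_e - 𝟙_f`, while every class `K` meets all bases
in the same number of elements. Hence the direction of the affine hull of the base polytope is the
kernel of the surjective map `ℝ^E → ℝ^(E/~)` summing the coordinates over each class, a subspace
of dimension `|E| - c`.
-/

def IsSeparator {n : ℕ} (M : Matroid (Fin n)) (S : Set (Fin n)) : Prop :=
  ∃ m : ℕ, ∀ B, M.IsBase B → (B ∩ S).ncard = m

open Function Set Module

theorem Set.ncard_insert_sdiff_singleton_inter_eq_iff {α : Type*} {B S : Set α} {e f : α}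
    (hB : B.Finite) (he : e ∈ B) (hf : f ∉ B) :
    (insert f (B \ {e}) ∩ S).ncard = (B ∩ S).ncard ↔ (e ∈ S ↔ f ∈ S) := by
  -- both sides are `(insert f B ∩ S).ncard`
  have key : (insert f (B \ {e}) ∩ S).ncard + ({e} ∩ S).ncard
      = (B ∩ S).ncard + ({f} ∩ S).ncard := by
    have hfin : (insert f B).Finite := hB.insert f
    rw [← ncard_union_eq (by rw [Set.disjoint_iff]; grind) (hfin.subset (by grind))
        (hfin.subset (by grind)),
      ← ncard_union_eq (by rw [Set.disjoint_iff]; grind) (hfin.subset (by grind))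
        (hfin.subset (by grind))]
    congr 1
    grind
  by_cases he' : e ∈ S <;> by_cases hf' : f ∈ S <;> simp [he', hf'] at key ⊢ <;> omega

theorem Set.indicator_one_sub_indicator_one_insert_sdiff_singleton {α R : Type*} [DecidableEq α]
    [AddGroupWithOne R] {B : Set α} {e f : α} (he : e ∈ B) (hf : f ∉ B) :
    (B.indicator fun _ => (1 : R)) - (insert f (B \ {e})).indicator (fun _ => 1)
      = Pi.single e 1 - Pi.single f 1 := by
  ext x
  by_cases hxe : x = e <;> by_cases hxf : x = f <;> by_cases hx : x ∈ B <;>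
    simp_all

section FiberSum

variable {R K α β : Type*} [Fintype α] [DecidableEq β]

variable (R) in
def fiberSum [Semiring R] (π : α → β) : (α → R) →ₗ[R] β → R :=
  ∑ a, LinearMap.single R (fun _ => R) (π a) ∘ₗ LinearMap.proj a

section Semiring

variable [Semiring R] (π : α → β)

theorem fiberSum_apply (y : α → R) : fiberSum R π y = ∑ a, Pi.single (π a) (y a) := by
  simp [fiberSum]

theorem fiberSum_single [DecidableEq α] (a : α) (r : R) :
    fiberSum R π (Pi.single a r) = Pi.single (π a) r := by
  rw [fiberSum_apply, Finset.sum_eq_single a] <;> simp +contextual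

theorem fiberSum_indicator_one (B : Set α) (b : β) :
    fiberSum R π (B.indicator fun _ => 1) b = ((B ∩ π ⁻¹' {b}).ncard : R) := by
  classical
  simp only [fiberSum_apply, Finset.sum_apply, Pi.single_apply, Set.indicator_apply, ← ite_and,
    Finset.sum_boole, Set.ncard_eq_toFinset_card']
  congr 2
  ext
  simp [and_comm, eq_comm]

theorem fiberSum_surjective [Fintype β] (hπ : Surjective π) : Surjective (fiberSum R π) := by
  classical
  intro y
  refine ⟨∑ b, Pi.single (surjInv hπ b) (y b), ?_⟩
  simp [map_sum, fiberSum_single, surjInv_eq, Finset.univ_sum_single]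

end Semiring

theorem ker_fiberSum [Ring R] [Fintype β] [DecidableEq α] (π : α → β) :
    LinearMap.ker (fiberSum R π) =
      Submodule.span R {x | ∃ a a', π a = π a' ∧ x = Pi.single a 1 - Pi.single a' 1} := by
  refine le_antisymm (fun y hy => ?_) (Submodule.span_le.2 ?_)
  · rcases isEmpty_or_nonempty α with hα | hα
    · simp [Subsingleton.elim y 0]
    set σ := invFun π
    have hσ (a : α) : π (σ (π a)) = π a := invFun_eq ⟨a, rfl⟩
    have hsum : ∑ a, (Pi.single (σ (π a)) (y a) : α → R) = 0 := by
      rw [LinearMap.mem_ker] at hy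
      simpa [fiberSum_apply π, map_sum, fiberSum_single] using congrArg (fiberSum R σ) hy
    have hy' : y = ∑ a, y a • (Pi.single a 1 - Pi.single (σ (π a)) 1) := by
      simp_rw [smul_sub, ← Pi.single_smul', smul_eq_mul, mul_one]
      rw [Finset.sum_sub_distrib, hsum, sub_zero, Finset.univ_sum_single]
    rw [hy']
    exact Submodule.sum_mem _ fun a _ =>
      Submodule.smul_mem _ _ (Submodule.subset_span ⟨a, σ (π a), (hσ a).symm, rfl⟩)
  · rintro _ ⟨a, a', h, rfl⟩
    simp [fiberSum_single, h]

theorem finrank_ker_fiberSum [Field K] [Fintype β] {π : α → β} (hπ : Surjective π) :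
    finrank K (LinearMap.ker (fiberSum K π)) = Fintype.card α - Fintype.card β := by
  have := LinearMap.finrank_range_add_finrank_ker (fiberSum K π)
  rw [LinearMap.range_eq_top.2 (fiberSum_surjective π hπ), finrank_top,
    finrank_fintype_fun_eq_card, finrank_fintype_fun_eq_card] at this
  omega

end FiberSum

theorem Function.Surjective.minimal_nonempty_saturated_iff {α β : Type*} {π : α → β}
    (hπ : Surjective π) {S : Set α} :
    (S.Nonempty ∧ (∀ a a', π a = π a' → (a ∈ S ↔ a' ∈ S)) ∧
      ∀ T ⊂ S, T.Nonempty → ¬ ∀ a a', π a = π a' → (a ∈ T ↔ a' ∈ T)) ↔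
      ∃ b, π ⁻¹' {b} = S := by
  have fiber_saturated (b : β) (a a' : α) (h : π a = π a') :
      a ∈ π ⁻¹' {b} ↔ a' ∈ π ⁻¹' {b} := by
    simp [h]
  constructor
  · rintro ⟨⟨a, ha⟩, hS, hmin⟩
    have hsub : π ⁻¹' {π a} ⊆ S := fun x hx => (hS x a hx).2 ha
    by_contra! hne
    exact hmin _ (hsub.ssubset_of_ne (hne _)) ⟨a, rfl⟩ (fiber_saturated _)
  · rintro ⟨b, rfl⟩
    refine ⟨(singleton_nonempty b).preimage hπ, fiber_saturated b, fun T hT ⟨t, ht⟩ hTsat => ?_⟩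
    obtain ⟨x, hx, hxT⟩ := exists_of_ssubset hT
    exact hxT ((hTsat t x ((hT.subset ht).trans hx.symm)).1 ht)

namespace Matroid

variable {α : Type*} {M : Matroid α} {B B' S : Set α}

def BaseExchange (M : Matroid α) (e f : α) : Prop :=
  ∃ B, M.IsBase B ∧ e ∈ B ∧ f ∉ B ∧ M.IsBase (insert f (B \ {e}))

def exchangeSetoid (M : Matroid α) : Setoid α :=
  Relation.EqvGen.setoid M.BaseExchange

theorem IsBase.ncard_inter_eq_of_forall_baseExchange [M.RankFinite]
    (hS : ∀ e f, M.BaseExchange e f → (e ∈ S ↔ f ∈ S)) (hB : M.IsBase B) (hB' : M.IsBase B') :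
    (B ∩ S).ncard = (B' ∩ S).ncard := by
  induction hk : (B \ B').ncard using Nat.strong_induction_on generalizing B with
  | _ k ih =>
  obtain hsub | ⟨e, he⟩ := (B \ B').eq_empty_or_nonempty
  · rw [hB.eq_of_subset_isBase hB' (sdiff_eq_empty.1 hsub)]
  obtain ⟨f, hf, hBf⟩ := hB.exchange hB' he
  rw [← (ncard_insert_sdiff_singleton_inter_eq_iff hB.finite he.1 hf.2).2
    (hS e f ⟨B, hB, he.1, hf.2, hBf⟩)]
  refine ih _ ?_ hBf rfl
  have hdiff : insert f (B \ {e}) \ B' = (B \ B') \ {e} := by grind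
  rw [hdiff, ← hk]
  exact ncard_sdiff_singleton_lt_of_mem he hB.finite.sdiff

theorem vectorSpan_indicator_isBase_eq_ker {R : Type*} [Fintype α] [Ring R] (M : Matroid α)
    [DecidableEq (Quotient M.exchangeSetoid)] :
    vectorSpan R {x : α → R | ∃ B, M.IsBase B ∧ x = B.indicator fun _ => 1} =
      LinearMap.ker (fiberSum R (Quotient.mk M.exchangeSetoid)) := by
  classical
  refine le_antisymm ?_ ?_
  · rw [vectorSpan_def, Submodule.span_le]
    rintro _ ⟨_, ⟨B, hB, rfl⟩, _, ⟨B', hB', rfl⟩, rfl⟩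
    rw [SetLike.mem_coe, LinearMap.mem_ker]
    dsimp only
    rw [vsub_eq_sub, map_sub, sub_eq_zero]
    ext q
    rw [fiberSum_indicator_one, fiberSum_indicator_one]
    refine congrArg _ (hB.ncard_inter_eq_of_forall_baseExchange (fun e f h => ?_) hB')
    have hef : Quotient.mk M.exchangeSetoid e = Quotient.mk _ f := Quotient.sound (.rel _ _ h)
    simp [hef]
  · rw [ker_fiberSum, Submodule.span_le]
    have hle : M.exchangeSetoid ≤ Setoid.comap (fun a => Pi.single a (1 : R))
        (vectorSpan R {x : α → R | ∃ B, M.IsBase B ∧ x = B.indicator fun _ => 1}).quotientRel :=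
      Setoid.eqvGen_le fun e f ⟨B, hB, he, hf, hBf⟩ => by
        rw [Setoid.comap_rel, Submodule.quotientRel_def,
          ← indicator_one_sub_indicator_one_insert_sdiff_singleton he hf]
        exact vsub_mem_vectorSpan R ⟨B, hB, rfl⟩ ⟨_, hBf, rfl⟩
    rintro _ ⟨a, a', h, rfl⟩
    exact (Submodule.quotientRel_def _).1 (hle (Quotient.exact h))

end Matroid

section Separator

variable {n : ℕ} {M : Matroid (Fin n)}

theorem isSeparator_iff_forall_mk_eq {S : Set (Fin n)} :
    IsSeparator M S ↔ ∀ e f,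
      Quotient.mk M.exchangeSetoid e = Quotient.mk M.exchangeSetoid f → (e ∈ S ↔ f ∈ S) := by
  simp_rw [Quotient.eq]
  refine ⟨fun ⟨m, hm⟩ => ?_, fun hS => ?_⟩
  · have hle : M.exchangeSetoid ≤ Setoid.ker (· ∈ S) :=
      Setoid.eqvGen_le fun e f ⟨B, hB, he, hf, hBf⟩ => by
        rw [Setoid.ker_def, eq_iff_iff,
          ← ncard_insert_sdiff_singleton_inter_eq_iff (toFinite B) he hf, hm B hB, hm _ hBf]
    exact fun e f h => (hle h).to_iff
  · obtain ⟨B₀, hB₀⟩ := M.exists_isBase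
    exact ⟨(B₀ ∩ S).ncard, fun B hB =>
      hB.ncard_inter_eq_of_forall_baseExchange (fun e f h => hS e f (.rel _ _ h)) hB₀⟩

theorem card_minimal_separators_eq_card_quotient :
    Nat.card {S : Set (Fin n) // S.Nonempty ∧ IsSeparator M S ∧
        ∀ T ⊂ S, T.Nonempty → ¬ IsSeparator M T} = Nat.card (Quotient M.exchangeSetoid) := by
  simp only [isSeparator_iff_forall_mk_eq]
  rw [Nat.card_congr (Equiv.subtypeEquivRight fun S =>
    Quotient.mk_surjective.minimal_nonempty_saturated_iff)]
  exact Nat.card_range_of_injective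
    ((preimage_injective.2 Quotient.mk_surjective).comp singleton_injective)

end Separator

theorem stmt10_general (n c : ℕ) (M : Matroid (Fin n))
    (hc : c = Nat.card {S : Set (Fin n) // S.Nonempty ∧ IsSeparator M S ∧
        ∀ T ⊂ S, T.Nonempty → ¬ IsSeparator M T}) :
    Module.finrank ℝ
        (vectorSpan ℝ {x : Fin n → ℝ | ∃ B, M.IsBase B ∧
          x = B.indicator (fun _ => (1 : ℝ))})
      = n - c := by
  classical
  rw [M.vectorSpan_indicator_isBase_eq_ker, finrank_ker_fiberSum Quotient.mk_surjective, hc,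
    card_minimal_separators_eq_card_quotient, Nat.card_eq_fintype_card, Fintype.card_fin]

/-- if a matroid M on ground set [n] has c connected components
(= minimal nonempty separators), then its base polytope, the convex hull of
the characteristic vectors of the bases, has dimension n − c. -/
theorem stmt10 (n c : ℕ) (M : Matroid (Fin n)) (hE : M.E = Set.univ)
    (hc : c = Nat.card {S : Set (Fin n) // S.Nonempty ∧ IsSeparator M S ∧
        ∀ T ⊂ S, T.Nonempty → ¬ IsSeparator M T}) :
    Module.finrank ℝ
        (vectorSpan ℝ {x : Fin n → ℝ | ∃ B, M.IsBase B ∧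
          x = B.indicator (fun _ => (1 : ℝ))})
      = n - c :=
  stmt10_general n c M hc
end

section
/- Let N be a loop- and coloop-free partition matroid of rank d on [n] with connected components C_1, …, C_k (ranks d_ℓ, 0 < d_ℓ < |C_ℓ|). For each permutation σ of [k], let M_σ be the nested matroid with bases the d-sets S satisfying Σ_{ℓ=1}^h |S ∩ C_{σ(ℓ)}| ≤ Σ_{ℓ=1}^h d_{σ(ℓ)} for all h < k. Then the union over all cyclic shifts σ of the identity (σ = cyclic rotations of (1,…,k)) of the base polytopes P(M_σ) equals the whole hypersimplex Δ(d,n); that is, every d-subset of [n] is a basis of M_σ for some cyclic rotation σ. -/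
/-!
Cycle lemma. Put `g ℓ = |S ∩ C ℓ| - d ℓ`; since the `C ℓ` are disjoint, `∑ g ≤ 0`. Extend `g`
periodically to `ℕ` and let `G m` be its `m`-th prefix sum; then `G (m + k) ≤ G m`, so a maximum of `G` on
`[0, k)` is a global maximum `G t`, and every partial sum of `g` started at `t` is `G (t + h) - G t ≤ 0`.
-/

open Finset Fin.NatCast

theorem Function.Periodic.exists_forall_sum_range_nonpos {M : Type*} [AddCommGroup M]
    [LinearOrder M] [IsOrderedAddMonoid M] {f : ℕ → M} {k : ℕ} (hf : Function.Periodic f k)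
    (hk : 0 < k) (hsum : ∑ j ∈ range k, f j ≤ 0) :
    ∃ t, ∀ h, ∑ j ∈ range h, f (t + j) ≤ 0 := by
  set G : ℕ → M := fun m => ∑ j ∈ range m, f j
  have hG_add_period : ∀ m, G (k + m) ≤ G m := fun m => by
    have hshift : ∑ j ∈ range m, f (k + j) = G m :=
      sum_congr rfl fun j _ => by rw [add_comm, hf]
    simp only [G, sum_range_add, hshift]
    exact add_le_of_nonpos_left hsum
  have hG_le_mod : ∀ m, G m ≤ G (m % k) := by
    intro m
    induction m using Nat.strong_induction_on with
    | _ m ih =>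
      rcases lt_or_ge m k with hm | hm
      · rw [Nat.mod_eq_of_lt hm]
      · obtain ⟨r, rfl⟩ := Nat.exists_eq_add_of_le hm
        calc G (k + r) ≤ G r := hG_add_period r
          _ ≤ G (r % k) := ih r (by omega)
          _ = G ((k + r) % k) := by rw [Nat.add_mod_left]
  obtain ⟨t, -, ht⟩ := exists_max_image (range k) G ⟨0, mem_range.mpr hk⟩
  refine ⟨t, fun h => ?_⟩
  have hmax : G (t + h) ≤ G t :=
    (hG_le_mod _).trans (ht _ (mem_range.mpr (Nat.mod_lt _ hk)))
  rw [show G (t + h) = G t + ∑ j ∈ range h, f (t + j) from sum_range_add f t h] at hmax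
  exact (add_le_iff_nonpos_right _).mp hmax

theorem Fin.sum_filter_val_lt_eq_sum_range {M : Type*} [AddCommMonoid M] {k : ℕ} [NeZero k]
    (g : Fin k → M) {h : ℕ} (hh : h ≤ k) :
    ∑ ℓ ∈ univ.filter (fun ℓ : Fin k => (ℓ : ℕ) < h), g ℓ = ∑ j ∈ range h, g j := by
  have himage : (univ.filter (fun ℓ : Fin k => (ℓ : ℕ) < h)).image Fin.val = range h := by
    ext j
    simp only [mem_image, mem_filter, mem_univ, true_and, mem_range]
    exact ⟨by rintro ⟨ℓ, hℓ, rfl⟩; exact hℓ, fun hj => ⟨⟨j, by omega⟩, hj, rfl⟩⟩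
  rw [← himage, sum_image Fin.val_injective.injOn]
  simp only [Fin.cast_val_eq_self]

theorem Fin.exists_forall_sum_filter_val_lt_add_nonpos {M : Type*} [AddCommGroup M]
    [LinearOrder M] [IsOrderedAddMonoid M] {k : ℕ} [NeZero k] (g : Fin k → M)
    (hg : ∑ ℓ, g ℓ ≤ 0) :
    ∃ t : Fin k, ∀ h ≤ k,
      ∑ ℓ ∈ univ.filter (fun ℓ : Fin k => (ℓ : ℕ) < h), g (ℓ + t) ≤ 0 := by
  have hper : Function.Periodic (fun j : ℕ => g j) k := fun j => by simp
  have hsum : ∑ j ∈ range k, g j ≤ 0 := by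
    simpa [← Fin.sum_univ_eq_sum_range (fun j => g j)] using hg
  obtain ⟨t, ht⟩ := hper.exists_forall_sum_range_nonpos (Nat.pos_of_neZero k) hsum
  refine ⟨t, fun h hh => ?_⟩
  rw [Fin.sum_filter_val_lt_eq_sum_range (fun ℓ => g (ℓ + (t : Fin k))) hh]
  simpa [add_comm] using ht h

theorem Finset.sum_card_inter_le_card {ι α : Type*} [DecidableEq α] {s : Finset ι}
    {C : ι → Finset α} (hC : (s : Set ι).PairwiseDisjoint C) (S : Finset α) :
    ∑ ℓ ∈ s, #(S ∩ C ℓ) ≤ #S := by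
  rw [← card_biUnion (hC.mono_on fun _ _ => inter_subset_right)]
  exact card_le_card (biUnion_subset.mpr fun _ _ => inter_subset_left)

theorem stmt15_general (n k : ℕ) (hk : 0 < k) (C : Fin k → Finset (Fin n))
    (dd : Fin k → ℕ)
    (hdisj : ∀ a b : Fin k, a ≠ b → Disjoint (C a) (C b))
    (S : Finset (Fin n)) (hS : S.card = (∑ ℓ, dd ℓ)) :
    ∃ t : Fin k, ∀ h : ℕ, h < k →
      (∑ ℓ ∈ Finset.univ.filter (fun ℓ : Fin k => (ℓ : ℕ) < h),
          (S ∩ C (ℓ + t)).card)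
        ≤ ∑ ℓ ∈ Finset.univ.filter (fun ℓ : Fin k => (ℓ : ℕ) < h), dd (ℓ + t) := by
  have : NeZero k := ⟨hk.ne'⟩
  have hcard : ∑ ℓ, #(S ∩ C ℓ) ≤ ∑ ℓ, dd ℓ :=
    hS ▸ sum_card_inter_le_card (fun a _ b _ hab => hdisj a b hab) S
  obtain ⟨t, ht⟩ := Fin.exists_forall_sum_filter_val_lt_add_nonpos
    (fun ℓ => (#(S ∩ C ℓ) : ℤ) - dd ℓ) (by rw [sum_sub_distrib, sub_nonpos]; exact_mod_cast hcard)
  refine ⟨t, fun h hh => ?_⟩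
  have hrot := ht h hh.le
  rw [sum_sub_distrib, sub_nonpos] at hrot
  exact_mod_cast hrot

/-- for a loop- and coloop-free partition matroid with
components `C 0, …, C (k-1)` of ranks `dd`, every d-subset `S` of [n]
(d = ∑ dd) is a basis of the nested matroid `M_σ` for some cyclic rotation σ
of the order (C 0, …, C (k-1)); i.e. the base polytopes of the k cyclic
rotations cover the hypersimplex Δ(d,n). -/
theorem stmt15 (n k : ℕ) (hk : 0 < k) (C : Fin k → Finset (Fin n))
    (dd : Fin k → ℕ)
    (hdisj : ∀ a b : Fin k, a ≠ b → Disjoint (C a) (C b))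
    (hcover : ∀ i : Fin n, ∃ ℓ, i ∈ C ℓ)
    (h0 : ∀ ℓ, 0 < dd ℓ) (h1 : ∀ ℓ, dd ℓ < (C ℓ).card)
    (S : Finset (Fin n)) (hS : S.card = (∑ ℓ, dd ℓ)) :
    ∃ t : Fin k, ∀ h : ℕ, h < k →
      (∑ ℓ ∈ Finset.univ.filter (fun ℓ : Fin k => (ℓ : ℕ) < h),
          (S ∩ C (ℓ + t)).card)
        ≤ ∑ ℓ ∈ Finset.univ.filter (fun ℓ : Fin k => (ℓ : ℕ) < h), dd (ℓ + t) :=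
  stmt15_general n k hk C dd hdisj S hS
end

section
/- The number of 2-splits of the hypersimplex Δ(d,n) (equivalently, of loop- and coloop-free partition matroids of rank d on [n] with exactly 2 connected components, since for k=2 the (k−1)! factor is 1) equals (1/2) Σ_{α=2}^{n−2} C(n,α) · μ(α), where μ(α) is the number of pairs (x_1, x_2) of positive integers with x_1 + x_2 = d, x_1 < α, x_2 < n − α. -/
/-!
An ordered 2-split datum is a set `C ⊆ [n]` together with a rank pair `(x₁, x₂)` that is
admissible for `α = #C`; grouping by `#C` counts these as `∑ α, C(n, α) μ(α)`. The swap
`(C, x₁, x₂) ↦ (Cᶜ, x₂, x₁)` is a fixed-point-free involution on ordered data whose orbits are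
exactly the unordered 2-splits, so every 2-split is counted twice.
-/

open Finset

theorem Finset.two_mul_card_image_of_fiber_eq_pair {α β : Type*} [DecidableEq α] [DecidableEq β]
    {s : Finset α} {f : α → β} (σ : α → α) (hσ : ∀ a ∈ s, σ a ∈ s) (hne : ∀ a ∈ s, σ a ≠ a)
    (hfiber : ∀ a ∈ s, ∀ b ∈ s, f b = f a ↔ b = a ∨ b = σ a) :
    2 * #(s.image f) = #s := by
  have hcard : ∀ y ∈ s.image f, #{b ∈ s | f b = y} = 2 := by
    intro y hy
    obtain ⟨a, ha, rfl⟩ := mem_image.mp hy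
    have hpair : {b ∈ s | f b = f a} = {a, σ a} := by
      ext b
      rw [mem_filter, mem_insert, mem_singleton]
      constructor
      · rintro ⟨hb, hfb⟩
        exact (hfiber a ha b hb).mp hfb
      · rintro (rfl | rfl)
        · exact ⟨ha, rfl⟩
        · exact ⟨hσ a ha, (hfiber a ha _ (hσ a ha)).mpr (Or.inr rfl)⟩
    rw [hpair, card_pair (hne a ha).symm]
  rw [card_eq_sum_card_image f s, sum_congr rfl hcard, sum_const, smul_eq_mul, mul_comm]

namespace Hypersimplex

variable {n d : ℕ}

variable (n d) in
def rankPairs (α : ℕ) : Finset (ℕ × ℕ) :=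
  (antidiagonal d).filter fun x => 0 < x.1 ∧ 0 < x.2 ∧ x.1 < α ∧ x.2 < n - α

theorem mem_rankPairs {α : ℕ} {x : ℕ × ℕ} :
    x ∈ rankPairs n d α ↔ 0 < x.1 ∧ 0 < x.2 ∧ x.1 + x.2 = d ∧ x.1 < α ∧ x.2 < n - α := by
  rw [rankPairs, mem_filter, HasAntidiagonal.mem_antidiagonal]
  tauto

theorem natCard_rankPairs (α : ℕ) :
    Nat.card {x : ℕ × ℕ // 0 < x.1 ∧ 0 < x.2 ∧ x.1 + x.2 = d ∧ x.1 < α ∧ x.2 < n - α} =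
      #(rankPairs n d α) :=
  (Nat.card_congr (Equiv.subtypeEquivRight fun _ => mem_rankPairs.symm)).trans
    (Nat.card_eq_finsetCard _)

theorem rankPairs_eq_empty {α : ℕ} (hα : α ∉ Icc 2 (n - 2)) : rankPairs n d α = ∅ := by
  refine eq_empty_of_forall_notMem fun x hx => hα ?_
  rw [mem_rankPairs] at hx
  rw [mem_Icc]
  omega

/-- The datum `⟨C, (x₁, x₂)⟩` stands for `C₁ = C`, `C₂ = Cᶜ` with ranks `x₁, x₂`. -/
def orderedSplits (n d : ℕ) : Finset (Σ _ : Finset (Fin n), ℕ × ℕ) :=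
  univ.sigma fun C => rankPairs n d #C

def splitSwap (s : Σ _ : Finset (Fin n), ℕ × ℕ) : Σ _ : Finset (Fin n), ℕ × ℕ :=
  ⟨s.1ᶜ, s.2.swap⟩

def splitPair (s : Σ _ : Finset (Fin n), ℕ × ℕ) : Finset (Finset (Fin n) × ℕ) :=
  {(s.1, s.2.1), (s.1ᶜ, s.2.2)}

theorem card_orderedSplits :
    #(orderedSplits n d) = ∑ α ∈ Icc 2 (n - 2), n.choose α * #(rankPairs n d α) := by
  have hsub : Icc 2 (n - 2) ⊆ range (n + 1) := fun α hα => by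
    rw [mem_Icc] at hα
    rw [mem_range]
    omega
  calc #(orderedSplits n d) = ∑ C : Finset (Fin n), #(rankPairs n d #C) := card_sigma _ _
    _ = ∑ α ∈ range (n + 1), n.choose α * #(rankPairs n d α) := by
      simpa using sum_powerset_apply_card (fun α => #(rankPairs n d α)) (x := univ (α := Fin n))
    _ = _ := (sum_subset hsub fun α _ hα => by
      rw [rankPairs_eq_empty hα, card_empty, mul_zero]).symm

section

variable {s t : Σ _ : Finset (Fin n), ℕ × ℕ}

theorem mem_orderedSplits : s ∈ orderedSplits n d ↔ s.2 ∈ rankPairs n d #s.1 := by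
  simp [orderedSplits]

theorem splitSwap_mem (hs : s ∈ orderedSplits n d) : splitSwap s ∈ orderedSplits n d := by
  rw [mem_orderedSplits, mem_rankPairs] at hs ⊢
  have := card_le_univ s.1
  simp only [splitSwap, Prod.fst_swap, Prod.snd_swap, card_compl, Fintype.card_fin] at hs ⊢
  omega

theorem compl_fst_ne_of_mem_orderedSplits (hs : s ∈ orderedSplits n d) : s.1ᶜ ≠ s.1 := by
  rw [mem_orderedSplits, mem_rankPairs] at hs
  obtain ⟨i, -⟩ : s.1.Nonempty := card_pos.mp (by omega)
  have : Nonempty (Fin n) := ⟨i⟩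
  exact compl_ne_self

theorem splitPair_eq_splitPair_iff : splitPair t = splitPair s ↔ t = s ∨ t = splitSwap s := by
  obtain ⟨C, x⟩ := s
  obtain ⟨D, y⟩ := t
  rw [splitPair, splitPair, ← coe_inj, coe_pair, coe_pair, Set.pair_eq_pair_iff]
  simp only [Prod.ext_iff, Sigma.mk.injEq, heq_eq_eq, splitSwap, Prod.fst_swap, Prod.snd_swap,
    compl_eq_comm (x := D), compl_compl]
  tauto

end

theorem mem_image_splitPair {P : Finset (Finset (Fin n) × ℕ)} :
    P ∈ (orderedSplits n d).image splitPair ↔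
      ∃ p q : Finset (Fin n) × ℕ, P = {p, q} ∧ p ≠ q ∧ q.1 = p.1ᶜ ∧
        0 < p.2 ∧ p.2 < p.1.card ∧ 0 < q.2 ∧ q.2 < q.1.card ∧ p.2 + q.2 = d := by
  rw [mem_image]
  constructor
  · rintro ⟨s, hs, rfl⟩
    have hC := compl_fst_ne_of_mem_orderedSplits hs
    have := card_le_univ s.1
    rw [mem_orderedSplits, mem_rankPairs] at hs
    refine ⟨(s.1, s.2.1), (s.1ᶜ, s.2.2), rfl, fun h => hC (congrArg Prod.fst h).symm, rfl, ?_⟩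
    simp only [card_compl, Fintype.card_fin]
    omega
  · rintro ⟨⟨C, a⟩, ⟨D, b⟩, rfl, -, rfl, ha, haC, hb, hbD, hab⟩
    refine ⟨⟨C, (a, b)⟩, ?_, rfl⟩
    rw [card_compl, Fintype.card_fin] at hbD
    exact mem_orderedSplits.mpr (mem_rankPairs.mpr ⟨ha, hb, hab, haC, hbD⟩)

theorem natCard_twoSplits :
    Nat.card {P : Finset (Finset (Fin n) × ℕ) //
        ∃ p q : Finset (Fin n) × ℕ, P = {p, q} ∧ p ≠ q ∧ q.1 = p.1ᶜ ∧
          0 < p.2 ∧ p.2 < p.1.card ∧ 0 < q.2 ∧ q.2 < q.1.card ∧ p.2 + q.2 = d} =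
      #((orderedSplits n d).image splitPair) :=
  (Nat.card_congr (Equiv.subtypeEquivRight fun _ => mem_image_splitPair.symm)).trans
    (Nat.card_eq_finsetCard _)

end Hypersimplex

open Hypersimplex in
theorem stmt17_general (n d : ℕ) :
    2 * Nat.card {P : Finset (Finset (Fin n) × ℕ) //
        ∃ p q : Finset (Fin n) × ℕ, P = {p, q} ∧ p ≠ q ∧ q.1 = p.1ᶜ ∧
          0 < p.2 ∧ p.2 < p.1.card ∧ 0 < q.2 ∧ q.2 < q.1.card ∧
          p.2 + q.2 = d}
      = ∑ α ∈ Finset.Icc 2 (n - 2), n.choose α *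
          Nat.card {x : ℕ × ℕ // 0 < x.1 ∧ 0 < x.2 ∧ x.1 + x.2 = d ∧
            x.1 < α ∧ x.2 < n - α} := by
  have hswap_ne : ∀ s ∈ orderedSplits n d, splitSwap s ≠ s := fun _ hs h =>
    compl_fst_ne_of_mem_orderedSplits hs (congrArg Sigma.fst h)
  rw [natCard_twoSplits, two_mul_card_image_of_fiber_eq_pair splitSwap (fun _ => splitSwap_mem)
    hswap_ne (fun _ _ _ _ => splitPair_eq_splitPair_iff), card_orderedSplits]
  simp only [natCard_rankPairs]

/-- the number of 2-splits of Δ(d,n) — i.e. of unordered data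
{(C₁,x₁),(C₂,x₂)} with C₂ = [n]−C₁ and ranks 0 < x_i < |C_i|, x₁+x₂ = d —
equals (1/2)·∑_{α=2}^{n−2} C(n,α)·μ(α), where μ(α) counts pairs of positive
integers (x₁,x₂) with x₁+x₂ = d, x₁ < α, x₂ < n−α. Stated without division:
twice the number of unordered data equals the sum. -/
theorem stmt17 (n d : ℕ) (hd : 0 < d) (hdn : d < n) :
    2 * Nat.card {P : Finset (Finset (Fin n) × ℕ) //
        ∃ p q : Finset (Fin n) × ℕ, P = {p, q} ∧ p ≠ q ∧ q.1 = p.1ᶜ ∧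
          0 < p.2 ∧ p.2 < p.1.card ∧ 0 < q.2 ∧ q.2 < q.1.card ∧
          p.2 + q.2 = d}
      = ∑ α ∈ Finset.Icc 2 (n - 2), n.choose α *
          Nat.card {x : ℕ × ℕ // 0 < x.1 ∧ 0 < x.2 ∧ x.1 + x.2 = d ∧
            x.1 < α ∧ x.2 < n - α} :=
  stmt17_general n d
end
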